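/- Let G be a graph and ω an end of G. If at least k vertices of G dominate ω, then G contains a subdivision of the complete graph K_k (i.e., K_k is a topological minor of G). -/

import Mathlib

open scoped ENNReal

namespace Paper

variable {V : Type*} {W : Type*}

/-- Reachability in `G` by a walk avoiding the vertex set `S`. -/
def ReachAvoid (G : SimpleGraph V) (S : Set V) (u v : V) : Prop :=
  ∃ p : G.Walk u v, ∀ x ∈ p.support, x ∉ S

/-- A ray (one-way infinite path) in `G`. -/
structure IsRay (G : SimpleGraph V) (f : ℕ → V) : Prop where
  inj : Function.Injective f
  adj : ∀ n, G.Adj (f n) (f (n + 1))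

/-- Two rays are equivalent (belong to the same end) if no finite vertex set
separates them: for every finite `S` some vertex of the first ray can be joined
to some vertex of the second by a walk avoiding `S`. -/
def EquivRay (G : SimpleGraph V) (f g : ℕ → V) : Prop :=
  ∀ S : Set V, S.Finite → ∃ m n, ReachAvoid G S (f m) (g n)

/-- The set of ends of `G`: rays modulo equivalence. -/
def Ends (G : SimpleGraph V) :=
  Quot (fun f g : {f : ℕ → V // IsRay G f} => EquivRay G f.1 g.1)

/-- `v` dominates the ray `f`: there are infinitely many `v`–`V(f)` paths
pairwise disjoint except in `v`. -/
def DominatesRay (G : SimpleGraph V) (v : V) (f : ℕ → V) : Prop :=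
  ∃ (g : ℕ → ℕ) (p : ∀ n, G.Walk v (f (g n))),
    Function.Injective g ∧ (∀ n, (p n).IsPath) ∧
    ∀ m n, m ≠ n → ∀ x ∈ (p m).support, x ∈ (p n).support → x = v

/-- The set of vertices dominating the end of the ray `r`. -/
def Dom (G : SimpleGraph V) (r : ℕ → V) : Set V := {v | DominatesRay G v r}

/-- Vertex-boundary of the vertex set `A`. -/
def vBoundary (G : SimpleGraph V) (A : Set V) : Set V :=
  {x | x ∈ A ∧ ∃ y, y ∉ A ∧ G.Adj x y}

/-- Edge-boundary of the vertex set `A`. -/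
def eBoundary (G : SimpleGraph V) (A : Set V) : Set (Sym2 V) :=
  {e | ∃ x y, x ∈ A ∧ y ∉ A ∧ G.Adj x y ∧ e = s(x, y)}

/-- `S` is a `V'`–`Ω(A)` separator: `V' ⊄ S` and no component of `G - S`
contains both a vertex of `V'` and (the tail of) a ray lying in `A`. -/
def SepVertsEndsIn (G : SimpleGraph V) (V' S A : Set V) : Prop :=
  ¬ V' ⊆ S ∧ ∀ v ∈ V', ∀ f : ℕ → V, IsRay G f → Set.range f ⊆ A →
    ∀ n, (∀ m, n ≤ m → f m ∉ S) → ¬ ReachAvoid G S v (f n)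

/-- `S` is an inclusion-minimal `V'`–`Ω(A)` separator. -/
def MinSepVertsEndsIn (G : SimpleGraph V) (V' S A : Set V) : Prop :=
  SepVertsEndsIn G V' S A ∧ ∀ S' ⊂ S, ¬ SepVertsEndsIn G V' S' A

/-- The graph `G_ω`: `G` minus the dominating vertices of the end of `r`. -/
def Gmin (G : SimpleGraph V) (r : ℕ → V) : SimpleGraph ((Dom G r)ᶜ : Set V) :=
  G.induce ((Dom G r)ᶜ : Set V)

/-- A ray of `G_ω` belonging to (the unique end `ω̂` induced by) the end `ω` of
the ray `r`. -/
def InDeletedEnd (G : SimpleGraph V) (r : ℕ → V)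
    (f : ℕ → ((Dom G r)ᶜ : Set V)) : Prop :=
  IsRay (Gmin G r) f ∧ EquivRay G (fun n => (f n : V)) r

/-- An `ω̂`-region of `G_ω`: induced connected, finite vertex-boundary,
containing a ray of `ω̂`. -/
def IsOmegaRegion (G : SimpleGraph V) (r : ℕ → V)
    (A : Set ((Dom G r)ᶜ : Set V)) : Prop :=
  ((Gmin G r).induce A).Connected ∧ (vBoundary (Gmin G r) A).Finite ∧
    ∃ f, InDeletedEnd G r f ∧ Set.range f ⊆ A

/-- `(Ĥ_i) → ω̂` : a sequence of distinct nested `ω̂`-regions whose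
vertex-boundaries are minimal separators. -/
def Converges (G : SimpleGraph V) (r : ℕ → V)
    (A : ℕ → Set ((Dom G r)ᶜ : Set V)) : Prop :=
  Function.Injective A ∧ (∀ i, IsOmegaRegion G r (A i)) ∧
    (∀ i, A (i + 1) ⊆ A i \ vBoundary (Gmin G r) (A i)) ∧
    (∀ i, MinSepVertsEndsIn (Gmin G r) (vBoundary (Gmin G r) (A i))
      (vBoundary (Gmin G r) (A (i + 1))) (A (i + 1)))

/-- The ratio `|∂_e A| / |∂_v A|`, as an extended nonnegative real. -/
noncomputable def bratio (G : SimpleGraph V) (A : Set V) : ℝ≥0∞ :=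
  ((eBoundary G A).encard : ℝ≥0∞) / ((vBoundary G A).encard : ℝ≥0∞)

open Classical in
/-- The relative degree `d_{e/v}` of the end of the ray `r`. -/
noncomputable def relDegree (G : SimpleGraph V) (r : ℕ → V) : ℝ≥0∞ :=
  if (Dom G r).Infinite ∨ ¬ ∃ f, InDeletedEnd G r f then
    ((Dom G r).encard : ℝ≥0∞)
  else
    ((Dom G r).encard : ℝ≥0∞) +
      ⨅ A : {A : ℕ → Set ((Dom G r)ᶜ : Set V) // Converges G r A},
        Filter.atTop.liminf fun i => bratio (Gmin G r) (A.1 i)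

/-- The degree of a vertex, as an extended real. -/
noncomputable def degER (G : SimpleGraph V) (v : V) : EReal :=
  (((G.neighborSet v).encard : ℝ≥0∞) : EReal)

/-- A subdivision of `K_k` in `G` with branching vertices `b 0, …, b (k-1)`. -/
def HasTKOn (G : SimpleGraph V) {k : ℕ} (b : Fin k ↪ V) : Prop :=
  ∃ p : ∀ i j : Fin k, G.Walk (b i) (b j),
    (∀ i j, i ≠ j → (p i j).IsPath) ∧
    (∀ i j, i ≠ j → ∀ x ∈ (p i j).support, x ∈ Set.range b → x = b i ∨ x = b j) ∧
    (∀ i j i' j', i ≠ j → i' ≠ j' → s(i, j) ≠ s(i', j') →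
      ∀ x ∈ (p i j).support, x ∈ (p i' j').support → x ∈ Set.range b)

/-- `K_k` is a topological minor of `G`. -/
def HasTopK (G : SimpleGraph V) (k : ℕ) : Prop :=
  ∃ b : Fin k ↪ V, HasTKOn G b

/-- A subdivision of `K_{ℵ₀}` in `G` with branching vertices `b 0, b 1, …`. -/
def HasTKInfOn (G : SimpleGraph V) (b : ℕ ↪ V) : Prop :=
  ∃ p : ∀ i j : ℕ, G.Walk (b i) (b j),
    (∀ i j, i ≠ j → (p i j).IsPath) ∧
    (∀ i j, i ≠ j → ∀ x ∈ (p i j).support, x ∈ Set.range b → x = b i ∨ x = b j) ∧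
    (∀ i j i' j', i ≠ j → i' ≠ j' → s(i, j) ≠ s(i', j') →
      ∀ x ∈ (p i j).support, x ∈ (p i' j').support → x ∈ Set.range b)

/-- `K_k` is a minor of `G` (with finite branch sets). -/
def HasKMinor (G : SimpleGraph V) (k : ℕ) : Prop :=
  ∃ B : Fin k → Finset V,
    (∀ i, (B i).Nonempty) ∧ (∀ i j, i ≠ j → Disjoint (B i) (B j)) ∧
    (∀ i, (G.induce (B i : Set V)).Connected) ∧
    (∀ i j, i ≠ j → ∃ x ∈ B i, ∃ y ∈ B j, G.Adj x y)

/-- The average degree of the finite induced subgraph of `G` on `s`. -/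
noncomputable def avgDegOn (G : SimpleGraph V) (s : Finset V) : ℝ :=
  (∑ v ∈ s, ((G.neighborSet v ∩ ↑s).ncard : ℝ)) / s.card

/-- `G` is rayless. -/
def Rayless (G : SimpleGraph V) : Prop := ¬ ∃ f : ℕ → V, IsRay G f

/-- The average degree of the vertex set `F` into `A` in `G`. -/
noncomputable def avgDegIn (G : SimpleGraph V) (A F : Set V) : ℝ :=
  (∑ᶠ v ∈ F, ((G.neighborSet v ∩ A).ncard : ℝ)) / F.ncard

/-!
Two vertices dominating the same ray cannot be separated by a finite set avoiding them: both
reach the tail of the ray beyond that set. So the branch paths of a subdivided `K_k` on `k`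
dominating vertices can be chosen greedily, one pair at a time, each avoiding the finitely many
vertices used so far.
-/

open Filter Set

section

variable {G : SimpleGraph V} {S : Set V} {u v w : V}

namespace ReachAvoid

lemma refl (hu : u ∉ S) : ReachAvoid G S u u :=
  ⟨.nil, by simpa⟩

lemma symm (h : ReachAvoid G S u v) : ReachAvoid G S v u := by
  obtain ⟨p, hp⟩ := h
  exact ⟨p.reverse, by simpa using hp⟩

lemma trans (huv : ReachAvoid G S u v) (hvw : ReachAvoid G S v w) : ReachAvoid G S u w := by
  obtain ⟨p, hp⟩ := huv
  obtain ⟨q, hq⟩ := hvw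
  refine ⟨p.append q, fun x hx => ?_⟩
  rcases (SimpleGraph.Walk.mem_support_append_iff _ _).1 hx with hx | hx
  exacts [hp x hx, hq x hx]

lemma of_adj (h : G.Adj u v) (hu : u ∉ S) (hv : v ∉ S) : ReachAvoid G S u v :=
  ⟨h.toWalk, by simp [hu, hv]⟩

lemma exists_isPath (h : ReachAvoid G S u v) :
    ∃ p : G.Walk u v, p.IsPath ∧ ∀ x ∈ p.support, x ∉ S := by
  classical
  obtain ⟨p, hp⟩ := h
  exact ⟨p.toPath, p.toPath.2, fun x hx => hp x (p.support_toPath_subset_support hx)⟩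

end ReachAvoid

lemma IsRay.eventually_notMem {r : ℕ → V} (hr : IsRay G r) (hS : S.Finite) :
    ∀ᶠ m in atTop, r m ∉ S := by
  simpa only [← Nat.cofinite_eq_atTop] using
    hr.inj.tendsto_cofinite.eventually hS.compl_mem_cofinite

lemma reachAvoid_of_tail {r : ℕ → V} (hadj : ∀ n, G.Adj (r n) (r (n + 1))) {N : ℕ}
    (hN : ∀ m, N ≤ m → r m ∉ S) {m n : ℕ} (hm : N ≤ m) (hn : N ≤ n) :
    ReachAvoid G S (r m) (r n) := by
  wlog hmn : m ≤ n generalizing m n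
  · exact (this hn hm (le_of_not_ge hmn)).symm
  induction n, hmn using Nat.le_induction with
  | base => exact .refl (hN m hm)
  | succ n hmn ih =>
    exact (ih (hm.trans hmn)).trans (.of_adj (hadj n) (hN n (hm.trans hmn)) (hN (n + 1) (by omega)))

/-- Each vertex of `S` lies on at most one path of the fan from `u`. -/
lemma DominatesRay.frequently_reachAvoid {r : ℕ → V} (hu : DominatesRay G u r) (hS : S.Finite)
    (huS : u ∉ S) : ∃ᶠ m in atTop, ReachAvoid G S u (r m) := by
  obtain ⟨g, p, hg, -, hdisj⟩ := hu
  have hfan : ∀ᶠ n in cofinite, ∀ x ∈ S, x ∉ (p n).support := by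
    refine (eventually_all_finite hS).2 fun x hx => eventually_cofinite.2 ?_
    refine Subsingleton.finite fun m hm n hn => ?_
    by_contra hmn
    exact huS (hdisj m n hmn x (not_not.1 hm) (not_not.1 hn) ▸ hx)
  have hg' : Tendsto g atTop atTop := by
    simpa only [Nat.cofinite_eq_atTop] using hg.tendsto_cofinite
  rw [Nat.cofinite_eq_atTop] at hfan
  exact hg'.frequently (hfan.frequently.mono fun n hn => ⟨p n, fun x hx hxS => hn x hxS hx⟩)

theorem reachAvoid_of_dominatesRay {r : ℕ → V} (hr : IsRay G r) (hu : DominatesRay G u r)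
    (hv : DominatesRay G v r) (hS : S.Finite) (huS : u ∉ S) (hvS : v ∉ S) :
    ReachAvoid G S u v := by
  obtain ⟨N, hN⟩ := eventually_atTop.1 (hr.eventually_notMem hS)
  obtain ⟨m, hum, hm⟩ :=
    ((hu.frequently_reachAvoid hS huS).and_eventually (eventually_ge_atTop N)).exists
  obtain ⟨n, hvn, hn⟩ :=
    ((hv.frequently_reachAvoid hS hvS).and_eventually (eventually_ge_atTop N)).exists
  exact hum.trans ((reachAvoid_of_tail hr.adj hN hm hn).trans hvn.symm)

variable {k : ℕ} {b : Fin k ↪ V}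

/-- Greedy construction: the path for a new pair is chosen first, and the paths for the
remaining pairs are then required to avoid its interior. -/
lemma exists_paths_of_forall_reachAvoid
    (h : ∀ F : Set V, F.Finite → Disjoint F (range b) → ∀ i j,
      ReachAvoid G (F ∪ (range b \ {b i, b j})) (b i) (b j))
    (P : Finset (Fin k × Fin k)) {F : Set V} (hF : F.Finite) (hFb : Disjoint F (range b)) :
    ∃ p : ∀ q : Fin k × Fin k, G.Walk (b q.1) (b q.2),
      (∀ q ∈ P, (p q).IsPath ∧
        ∀ x ∈ (p q).support, x ∉ F ∪ (range b \ {b q.1, b q.2})) ∧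
      ∀ q ∈ P, ∀ q' ∈ P, q ≠ q' →
        ∀ x ∈ (p q).support, x ∈ (p q').support → x ∈ range b := by
  classical
  induction P using Finset.induction_on generalizing F with
  | empty =>
    choose p _ using h ∅ finite_empty (empty_disjoint _)
    exact ⟨fun q => p q.1 q.2, by simp, by simp⟩
  | insert q₀ P _ ih =>
    obtain ⟨p₀, hp₀, hp₀S⟩ := (h F hF hFb q₀.1 q₀.2).exists_isPath
    obtain ⟨p, hp, hdisj⟩ := ih (hF.union (p₀.support.finite_toSet.sdiff (t := range b)))
      (disjoint_union_left.2 ⟨hFb, disjoint_sdiff_left⟩)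
    have hfresh : ∀ q ∈ P, ∀ x ∈ (p q).support, x ∈ p₀.support → x ∈ range b :=
      fun q hq x hx hx₀ => by_contra fun hxb => (hp q hq).2 x hx (.inl (.inr ⟨hx₀, hxb⟩))
    refine ⟨Function.update p q₀ p₀, fun q hq => ?_, fun q hq q' hq' hqq' x hx hx' => ?_⟩
    · rcases eq_or_ne q q₀ with rfl | hq₀
      · rw [Function.update_self]
        exact ⟨hp₀, hp₀S⟩
      rw [Function.update_of_ne hq₀]
      obtain ⟨hpath, hpS⟩ := hp q ((Finset.mem_insert.1 hq).resolve_left hq₀)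
      exact ⟨hpath, fun x hx hxS => hpS x hx (hxS.imp_left .inl)⟩
    · rcases eq_or_ne q q₀ with rfl | hq₀
      · rw [Function.update_self] at hx
        rw [Function.update_of_ne hqq'.symm] at hx'
        exact hfresh q' ((Finset.mem_insert.1 hq').resolve_left hqq'.symm) x hx' hx
      rw [Function.update_of_ne hq₀] at hx
      have hqP : q ∈ P := (Finset.mem_insert.1 hq).resolve_left hq₀
      rcases eq_or_ne q' q₀ with rfl | hq'₀
      · rw [Function.update_self] at hx'
        exact hfresh q hqP x hx hx'
      rw [Function.update_of_ne hq'₀] at hx'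
      exact hdisj q hqP q' ((Finset.mem_insert.1 hq').resolve_left hq'₀) hqq' x hx hx'

lemma hasTKOn_of_forall_reachAvoid
    (h : ∀ F : Set V, F.Finite → Disjoint F (range b) → ∀ i j,
      ReachAvoid G (F ∪ (range b \ {b i, b j})) (b i) (b j)) :
    HasTKOn G b := by
  obtain ⟨p, hp, hdisj⟩ :=
    exists_paths_of_forall_reachAvoid h Finset.univ finite_empty (empty_disjoint _)
  refine ⟨fun i j => p (i, j), fun i j _ => (hp _ (Finset.mem_univ _)).1, ?_, ?_⟩
  · intro i j _ x hx hxb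
    by_contra hne
    exact (hp (i, j) (Finset.mem_univ _)).2 x hx (.inr ⟨hxb, by simpa using hne⟩)
  · intro i j i' j' _ _ hs
    refine hdisj _ (Finset.mem_univ _) _ (Finset.mem_univ _) fun hq => hs ?_
    simp_all

end

/-- if at least `k` vertices dominate the end of the ray `r`,
then `K_k` is a topological minor of `G`. -/
theorem topK_of_many_dominating (G : SimpleGraph V) (r : ℕ → V) (hr : IsRay G r)
    (k : ℕ) (hk : (k : ℕ∞) ≤ (Dom G r).encard) : HasTopK G k := by
  obtain ⟨b⟩ : Nonempty (Fin k ↪ Dom G r) := by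
    rwa [← Cardinal.lift_mk_le', Cardinal.mk_fin, Cardinal.lift_natCast, Cardinal.nat_le_lift_iff,
      ← Cardinal.natCast_le_toENat]
  refine ⟨b.trans (.subtype _), hasTKOn_of_forall_reachAvoid fun F hF hFb i j => ?_⟩
  have hb : ∀ l, (b l : V) ∉ F := fun l hl => hFb.notMem_of_mem_left hl ⟨l, rfl⟩
  exact reachAvoid_of_dominatesRay hr (b i).2 (b j).2 (hF.union (finite_range _).sdiff)
    (by simp [hb]) (by simp [hb])

end Paper
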